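/- The map σ satisfies the multiplicativity conditions σ ∘ (id ⊗ m) = (m ⊗ id) ∘ (id ⊗ σ) ∘ (σ ⊗ id) and σ ∘ (m ⊗ id) = (id ⊗ m) ∘ (σ ⊗ id) ∘ (id ⊗ σ), as k-linear maps U ⊗_k U ⊗_k U → U ⊗_k U, where m : U ⊗_k U → U is the multiplication map of U. -/

import Mathlib

open scoped TensorProduct

/-- The Cartan matrix of type `A_n`. -/
def cartanA (n : ℕ) (i j : Fin n) : ℤ :=
  if i = j then 2
  else if (i : ℕ) + 1 = (j : ℕ) ∨ (j : ℕ) + 1 = (i : ℕ) then -1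
  else 0

/-- For `α, γ ∈ ℕⁿ`, `c(α,γ) = ∑_{i,j} a_{ij} α_i γ_j` with `A` the Cartan matrix
of type `A_n`. -/
def cpair {n : ℕ} (α γ : Fin n → ℕ) : ℤ :=
  ∑ i : Fin n, ∑ j : Fin n, cartanA n i j * (α i : ℤ) * (γ j : ℤ)

/-- The quantum Serre relations of type `A_n` hold for the family `y`. -/
def serreCond (k : Type) [CommRing k] (q : kˣ) {n : ℕ} {B : Type} [Ring B] [Algebra k B]
    (y : Fin n → B) : Prop :=
  (∀ i j : Fin n, 1 < |((i : ℕ) : ℤ) - ((j : ℕ) : ℤ)| → y i * y j = y j * y i) ∧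
  (∀ i j : Fin n, |((i : ℕ) : ℤ) - ((j : ℕ) : ℤ)| = 1 →
    y i ^ 2 * y j - ((q : k) + ((q⁻¹ : kˣ) : k)) • (y i * y j * y i) + y j * y i ^ 2 = 0)

/-- `U`, with distinguished generators `x`, is a presentation of `U_q^+(sl_{n+1})`:
the quotient of the free associative unital `k`-algebra on `x_1, …, x_n` by the
two-sided ideal generated by the quantum Serre relations.  This is expressed by:
the relations hold in `U`, the `x i` generate `U`, and `U` has the corresponding
universal (lifting) property. -/
def IsUqPlus (k : Type) [CommRing k] (q : kˣ) {n : ℕ} (U : Type) [Ring U] [Algebra k U]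
    (x : Fin n → U) : Prop :=
  serreCond k q x ∧ Algebra.adjoin k (Set.range x) = ⊤ ∧
    ∀ (B : Type) [Ring B] [Algebra k B] (y : Fin n → B),
      serreCond k q y → ∃ f : U →ₐ[k] B, ∀ i, f (x i) = y i

/-- The map `s ⊗ id` acting on the first two factors of `V ⊗ (V ⊗ V)`. -/
noncomputable def map12 (k V : Type) [CommRing k] [AddCommGroup V] [Module k V]
    (s : V ⊗[k] V →ₗ[k] V ⊗[k] V) :
    V ⊗[k] (V ⊗[k] V) →ₗ[k] V ⊗[k] (V ⊗[k] V) :=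
  (TensorProduct.assoc k V V V).toLinearMap ∘ₗ (TensorProduct.map s LinearMap.id) ∘ₗ
    (TensorProduct.assoc k V V V).symm.toLinearMap

/-- The multiplication on the first two factors, `m ⊗ id : U ⊗ U ⊗ U → U ⊗ U`. -/
noncomputable def mulFst (k U : Type) [CommRing k] [Ring U] [Algebra k U] :
    U ⊗[k] (U ⊗[k] U) →ₗ[k] U ⊗[k] U :=
  TensorProduct.map (LinearMap.mul' k U) LinearMap.id ∘ₗ
    (TensorProduct.assoc k U U U).symm.toLinearMap

/-!
Both sides of each identity send a tensor `a ⊗ b ⊗ c` of homogeneous elements to the same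
permutation of the factors (multiplied together), times a scalar. On the left this scalar is
`q^{c(α, β + γ)}` resp. `q^{c(α + β, γ)}`, on the right the product of the two scalars produced by
the two applications of `σ`; they agree because `c` is biadditive. Homogeneous pure tensors span
`U ⊗ U ⊗ U`, so the identities hold.
-/

open TensorProduct LinearMap

lemma cpair_add_left {n : ℕ} (α β γ : Fin n → ℕ) :
    cpair (α + β) γ = cpair α γ + cpair β γ := by
  simp only [cpair, Pi.add_apply, Nat.cast_add, ← Finset.sum_add_distrib]
  congr! 2 with i _ j _
  ring

lemma cpair_add_right {n : ℕ} (α β γ : Fin n → ℕ) :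
    cpair α (β + γ) = cpair α β + cpair α γ := by
  simp only [cpair, Pi.add_apply, Nat.cast_add, ← Finset.sum_add_distrib]
  congr! 2 with i _ j _
  ring

theorem TensorProduct.ext_of_homogeneous₃ {R ι M P : Type*} [CommRing R] [DecidableEq ι]
    [AddCommGroup M] [Module R M] [AddCommGroup P] [Module R P]
    (𝒜 : ι → Submodule R M) [DirectSum.Decomposition 𝒜] {f g : M ⊗[R] (M ⊗[R] M) →ₗ[R] P}
    (h : ∀ i j l (a b c : M), a ∈ 𝒜 i → b ∈ 𝒜 j → c ∈ 𝒜 l →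
      f (a ⊗ₜ (b ⊗ₜ c)) = g (a ⊗ₜ (b ⊗ₜ c))) : f = g :=
  TensorProduct.ext <| DirectSum.decompose_lhom_ext 𝒜 fun i => LinearMap.ext fun ⟨a, ha⟩ =>
    TensorProduct.ext <| DirectSum.decompose_lhom_ext 𝒜 fun j => LinearMap.ext fun ⟨b, hb⟩ =>
      DirectSum.decompose_lhom_ext 𝒜 fun l => LinearMap.ext fun ⟨c, hc⟩ => h i j l a b c ha hb hc

section Braiding

variable {R A : Type} {ι : Type*} [CommRing R] [DecidableEq ι] [AddMonoid ι]
  [Ring A] [Algebra R A] (𝒜 : ι → Submodule R A) [GradedAlgebra 𝒜]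
  {χ : ι → ι → R} {σ : A ⊗[R] A →ₗ[R] A ⊗[R] A}

theorem braiding_comp_lTensor_mul' (hχ : ∀ α β γ, χ α (β + γ) = χ α β * χ α γ)
    (hσ : ∀ α γ (a b : A), a ∈ 𝒜 α → b ∈ 𝒜 γ → σ (a ⊗ₜ b) = χ α γ • (b ⊗ₜ a)) :
    σ ∘ₗ map id (mul' R A) = mulFst R A ∘ₗ map id σ ∘ₗ map12 R A σ := by
  refine TensorProduct.ext_of_homogeneous₃ 𝒜 fun α β γ a b c ha hb hc => ?_
  simp [map12, mulFst, hσ _ _ _ _ ha (SetLike.mul_mem_graded hb hc), hσ _ _ _ _ ha hb,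
    hσ _ _ _ _ ha hc, hχ, tmul_smul, ← smul_tmul', smul_smul]

theorem braiding_comp_mulFst (hχ : ∀ α β γ, χ (α + β) γ = χ α γ * χ β γ)
    (hσ : ∀ α γ (a b : A), a ∈ 𝒜 α → b ∈ 𝒜 γ → σ (a ⊗ₜ b) = χ α γ • (b ⊗ₜ a)) :
    σ ∘ₗ mulFst R A = map id (mul' R A) ∘ₗ map12 R A σ ∘ₗ map id σ := by
  refine TensorProduct.ext_of_homogeneous₃ 𝒜 fun α β γ a b c ha hb hc => ?_
  simp [map12, mulFst, hσ _ _ _ _ (SetLike.mul_mem_graded ha hb) hc, hσ _ _ _ _ hb hc,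
    hσ _ _ _ _ ha hc, hχ, tmul_smul, ← smul_tmul', smul_smul, mul_comm]

end Braiding

theorem stmt8_general (k U : Type) [CommRing k] (q : kˣ) (n : ℕ)
    [Ring U] [Algebra k U]
    (𝒜 : (Fin n → ℕ) → Submodule k U) [GradedAlgebra 𝒜]
    (σ : U ⊗[k] U →ₗ[k] U ⊗[k] U)
    (hσ : ∀ (α γ : Fin n → ℕ) (a b : U), a ∈ 𝒜 α → b ∈ 𝒜 γ →
      σ (a ⊗ₜ[k] b) = ((q ^ cpair α γ : kˣ) : k) • (b ⊗ₜ[k] a)) :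
    σ ∘ₗ TensorProduct.map LinearMap.id (LinearMap.mul' k U) =
      mulFst k U ∘ₗ TensorProduct.map LinearMap.id σ ∘ₗ map12 k U σ ∧
    σ ∘ₗ mulFst k U =
      TensorProduct.map LinearMap.id (LinearMap.mul' k U) ∘ₗ map12 k U σ ∘ₗ
        TensorProduct.map LinearMap.id σ :=
  ⟨braiding_comp_lTensor_mul' 𝒜
      (fun α β γ => by rw [cpair_add_right, zpow_add, Units.val_mul]) hσ,
    braiding_comp_mulFst 𝒜 (fun α β γ => by rw [cpair_add_left, zpow_add, Units.val_mul]) hσ⟩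

/-- `σ` satisfies the multiplicativity conditions
`σ ∘ (id ⊗ m) = (m ⊗ id) ∘ (id ⊗ σ) ∘ (σ ⊗ id)` and
`σ ∘ (m ⊗ id) = (id ⊗ m) ∘ (σ ⊗ id) ∘ (id ⊗ σ)`
as `k`-linear maps `U ⊗ U ⊗ U → U ⊗ U`, `m` being the multiplication of `U`. -/
theorem stmt8 (k U : Type) [CommRing k] (q : kˣ) (n : ℕ) (hn : 1 ≤ n)
    [Ring U] [Algebra k U] (x : Fin n → U) (hU : IsUqPlus k q U x)
    (𝒜 : (Fin n → ℕ) → Submodule k U) [GradedAlgebra 𝒜]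
    (hx𝒜 : ∀ i : Fin n, x i ∈ 𝒜 (Pi.single i 1))
    (σ : U ⊗[k] U →ₗ[k] U ⊗[k] U)
    (hσ : ∀ (α γ : Fin n → ℕ) (a b : U), a ∈ 𝒜 α → b ∈ 𝒜 γ →
      σ (a ⊗ₜ[k] b) = ((q ^ cpair α γ : kˣ) : k) • (b ⊗ₜ[k] a)) :
    σ ∘ₗ TensorProduct.map LinearMap.id (LinearMap.mul' k U) =
      mulFst k U ∘ₗ TensorProduct.map LinearMap.id σ ∘ₗ map12 k U σ ∧
    σ ∘ₗ mulFst k U =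
      TensorProduct.map LinearMap.id (LinearMap.mul' k U) ∘ₗ map12 k U σ ∘ₗ
        TensorProduct.map LinearMap.id σ :=
  stmt8_general k U q n 𝒜 σ hσ
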